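/- Let q ≥ 1, Γ ∈ 𝓕_i(a_1,…,a_q; b_1,…,b_q), and suppose b_q + 1 is not a sink of Γ. Let R(Γ) be the graph obtained from Γ by replacing its unique edge of the form (s, b_q) by (s, b_q + 1). Then R(Γ) ∈ 𝓕_i(a_1,…,a_q; b_1,…,b_{q−1}, b_q + 1) and sgn_i(R(Γ)) = −sgn_i(Γ). -/

import Mathlib

open Finset

/-- A "flow graph" is a finite set of directed edges with integer vertices. -/
abbrev FlowGraph : Type := Finset (ℤ × ℤ)

/-- The edges of `E` beginning at `r`. -/
def beginsAt (E : FlowGraph) (r : ℤ) : Finset (ℤ × ℤ) := E.filter (fun e => e.1 = r)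

/-- The edges of `E` ending at `r`. -/
def endsAt (E : FlowGraph) (r : ℤ) : Finset (ℤ × ℤ) := E.filter (fun e => e.2 = r)

/-- `E` is a flow with set of sources `A` and set of sinks `B`:
every edge `(s,t)` has `s < t`; the sources and sinks are pairwise distinct;
exactly one edge begins at each source (and none ends there); exactly one edge
ends at each sink (and none begins there); and every other vertex either meets
no edge, or exactly one edge ends at it and exactly one edge begins at it
(such a vertex is a transit point). -/
structure IsFlow (E : FlowGraph) (A B : Finset ℤ) : Prop where
  edge_lt : ∀ e ∈ E, e.1 < e.2
  disjAB : Disjoint A B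
  source_out : ∀ a ∈ A, (beginsAt E a).card = 1
  source_in : ∀ a ∈ A, endsAt E a = ∅
  sink_in : ∀ b ∈ B, (endsAt E b).card = 1
  sink_out : ∀ b ∈ B, beginsAt E b = ∅
  transit : ∀ r : ℤ, r ∉ A → r ∉ B →
      (beginsAt E r = ∅ ∧ endsAt E r = ∅) ∨
      ((beginsAt E r).card = 1 ∧ (endsAt E r).card = 1)

/-- The set of transit points of the flow `E` with sources `A` and sinks `B`:
the vertices meeting some edge which are neither sources nor sinks. -/
def transitSet (E : FlowGraph) (A B : Finset ℤ) : Finset ℤ :=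
  ((E.image Prod.fst) ∪ (E.image Prod.snd)) \ (A ∪ B)

def IsTransitPoint (E : FlowGraph) (A B : Finset ℤ) (r : ℤ) : Prop :=
  r ∈ transitSet E A B

/-- Two vertices are linked if they lie in the same connected component of `E`. -/
def Linked (E : FlowGraph) (x y : ℤ) : Prop :=
  Relation.ReflTransGen (fun u v => (u, v) ∈ E ∨ (v, u) ∈ E) x y

/-- The finset of values of a family of integers. -/
def srcSet {q : ℕ} (a : Fin q → ℤ) : Finset ℤ := Finset.image a Finset.univ

/-- Membership in `𝓕_i(a_1,…,a_q; b_1,…,b_q)` : a flow with sources the `a j`,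
sinks the `b j`, and no transit point greater than `i`. -/
def InF {q : ℕ} (i : ℤ) (a b : Fin q → ℤ) (E : FlowGraph) : Prop :=
  IsFlow E (srcSet a) (srcSet b) ∧
  ∀ r : ℤ, IsTransitPoint E (srcSet a) (srcSet b) r → r ≤ i

/-- `σ` is the linking permutation: the source `a j` is linked to the sink `b (σ j)`. -/
def IsLinkingPerm {q : ℕ} (E : FlowGraph) (a b : Fin q → ℤ) (σ : Equiv.Perm (Fin q)) : Prop :=
  ∀ j : Fin q, Linked E (a j) (b (σ j))

/-- The `i`-sign of a flow `E` (with sources `A`, sinks given by the family `b` and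
sinks-set `B`), computed from a linking permutation `σ`:
`sgn σ * (-1) ^ (Σ_j (b_j - i) + #transit points)`. -/
def signValue {q : ℕ} (i : ℤ) (b : Fin q → ℤ) (σ : Equiv.Perm (Fin q))
    (E : FlowGraph) (A B : Finset ℤ) : ℤ :=
  (Equiv.Perm.sign σ : ℤ) *
    (-1) ^ ((∑ j : Fin q, (b j - i)).toNat + (transitSet E A B).card)


/-!
Since `b_q + 1 > i` is neither a source, nor a sink, nor (by the transit bound) a transit point of
`Γ`, it meets no edge of `Γ`. Moving the end of the edge `(s, b_q)` to `b_q + 1` therefore only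
exchanges the roles of `b_q` and `b_q + 1`: `R(Γ)` is a flow with the same transit points.
The vertex map `b_q ↦ b_q + 1` sends edges of `Γ` to edges of `R(Γ)`, so it carries the linking
of `Γ` to that of `R(Γ)`; as two distinct sinks are never linked (out-degrees are at most one),
the linking permutation is unchanged. Only `Σ (b_j - i)` changes, by one, which flips the sign.
-/

open Function

lemma mem_beginsAt {E : FlowGraph} {r : ℤ} {e : ℤ × ℤ} :
    e ∈ beginsAt E r ↔ e ∈ E ∧ e.1 = r := mem_filter

lemma mem_endsAt {E : FlowGraph} {r : ℤ} {e : ℤ × ℤ} :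
    e ∈ endsAt E r ↔ e ∈ E ∧ e.2 = r := mem_filter

lemma notMem_of_endsAt_eq_empty {E : FlowGraph} {u : ℤ} (hu : endsAt E u = ∅) (s : ℤ) :
    (s, u) ∉ E :=
  fun h => notMem_empty _ (hu ▸ mem_endsAt.mpr ⟨h, rfl⟩)

lemma mem_transitSet {E : FlowGraph} {A B : Finset ℤ} {r : ℤ} :
    r ∈ transitSet E A B ↔
      ((beginsAt E r).Nonempty ∨ (endsAt E r).Nonempty) ∧ r ∉ A ∧ r ∉ B := by
  simp only [transitSet, beginsAt, endsAt, mem_sdiff, mem_union, mem_image, not_or,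
    filter_nonempty_iff]

lemma Linked.symm {E : FlowGraph} {x y : ℤ} (h : Linked E x y) : Linked E y x := by
  induction h with
  | refl => exact .refl
  | tail _ hvw ih => exact .head hvw.symm ih

lemma Linked.map {E E' : FlowGraph} (f : ℤ → ℤ)
    (hf : ∀ v w, (v, w) ∈ E → (f v, f w) ∈ E')
    {x y : ℤ} (h : Linked E x y) : Linked E' (f x) (f y) :=
  Relation.ReflTransGen.lift f (fun v w hvw => hvw.imp (hf v w) (hf w v)) x y h

-- With out-degrees at most one, an undirected walk leaving a vertex of out-degree zero can only
-- follow edges backwards.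
lemma Linked.reflTransGen_of_beginsAt_eq_empty {E : FlowGraph}
    (hout : ∀ r, (beginsAt E r).card ≤ 1) {x y : ℤ} (hx : beginsAt E x = ∅)
    (h : Linked E x y) : Relation.ReflTransGen (fun u v => (u, v) ∈ E) y x := by
  induction h with
  | refl => exact .refl
  | @tail m c _ step ih =>
    rcases step with hmc | hcm
    · obtain rfl | ⟨z, hmz, hzx⟩ := ih.cases_head
      · exact absurd (hx ▸ mem_beginsAt.mpr ⟨hmc, rfl⟩) (notMem_empty _)
      · have hcz := card_le_one.mp (hout m) _ (mem_beginsAt.mpr ⟨hmc, rfl⟩) _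
          (mem_beginsAt.mpr ⟨hmz, rfl⟩)
        simp only [Prod.mk.injEq, true_and] at hcz
        exact hcz ▸ hzx
    · exact .head hcm ih

namespace IsFlow

variable {E : FlowGraph} {A B : Finset ℤ}

lemma card_beginsAt_le_one (hE : IsFlow E A B) (r : ℤ) : (beginsAt E r).card ≤ 1 := by
  by_cases hA : r ∈ A
  · exact (hE.source_out r hA).le
  by_cases hB : r ∈ B
  · simp [hE.sink_out r hB]
  rcases hE.transit r hA hB with ⟨h, _⟩ | ⟨h, _⟩ <;> simp [h]

lemma eq_of_linked (hE : IsFlow E A B) {x y : ℤ} (hx : x ∈ B) (hy : y ∈ B)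
    (h : Linked E x y) : x = y := by
  obtain rfl | ⟨z, hyz, -⟩ :=
    (h.reflTransGen_of_beginsAt_eq_empty hE.card_beginsAt_le_one (hE.sink_out x hx)).cases_head
  · rfl
  · simpa [hE.sink_out y hy] using mem_beginsAt.mpr ⟨hyz, rfl⟩

lemma endsAt_sink (hE : IsFlow E A B) {s t : ℤ} (ht : t ∈ B) (hst : (s, t) ∈ E) :
    endsAt E t = {(s, t)} := by
  obtain ⟨e, he⟩ := card_eq_one.mp (hE.sink_in t ht)
  have : (s, t) ∈ endsAt E t := mem_endsAt.mpr ⟨hst, rfl⟩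
  rw [he, mem_singleton] at this
  rw [he, this]

lemma isolated_of_notMem_transitSet (hE : IsFlow E A B) {r : ℤ} (hA : r ∉ A) (hB : r ∉ B)
    (hr : r ∉ transitSet E A B) : beginsAt E r = ∅ ∧ endsAt E r = ∅ := by
  refine (hE.transit r hA hB).resolve_right fun ⟨_, h⟩ => hr ?_
  exact mem_transitSet.mpr ⟨Or.inr (card_pos.mp (h ▸ one_pos)), hA, hB⟩

end IsFlow

-- The graph `R(Γ)` of the paper is `redirectEdge Γ s b_q (b_q + 1)`.
def redirectEdge (E : FlowGraph) (s t u : ℤ) : FlowGraph := insert (s, u) (E.erase (s, t))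

section redirectEdge

variable {E : FlowGraph} {s t u : ℤ}

lemma mem_redirectEdge {e : ℤ × ℤ} :
    e ∈ redirectEdge E s t u ↔ e = (s, u) ∨ e ≠ (s, t) ∧ e ∈ E := by
  rw [redirectEdge, mem_insert, mem_erase]

lemma beginsAt_redirectEdge (r : ℤ) :
    beginsAt (redirectEdge E s t u) r =
      if s = r then insert (s, u) ((beginsAt E r).erase (s, t))
      else (beginsAt E r).erase (s, t) := by
  simp only [redirectEdge, beginsAt, filter_insert, filter_erase]

lemma endsAt_redirectEdge (r : ℤ) :
    endsAt (redirectEdge E s t u) r =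
      if u = r then insert (s, u) ((endsAt E r).erase (s, t))
      else (endsAt E r).erase (s, t) := by
  simp only [redirectEdge, endsAt, filter_insert, filter_erase]

lemma card_beginsAt_redirectEdge (hst : (s, t) ∈ E) (hsu : (s, u) ∉ E) (r : ℤ) :
    (beginsAt (redirectEdge E s t u) r).card = (beginsAt E r).card := by
  rw [beginsAt_redirectEdge]
  split_ifs with hsr
  · subst hsr
    have hmem : (s, t) ∈ beginsAt E s := mem_beginsAt.mpr ⟨hst, rfl⟩
    rw [card_insert_of_notMem fun h => hsu (mem_beginsAt.mp (mem_of_mem_erase h)).1,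
      card_erase_of_mem hmem, Nat.sub_add_cancel (card_pos.mpr ⟨_, hmem⟩)]
  · rw [erase_eq_of_notMem fun h => hsr (mem_beginsAt.mp h).2]

lemma endsAt_redirectEdge_of_ne {r : ℤ} (hrt : r ≠ t) (hru : r ≠ u) :
    endsAt (redirectEdge E s t u) r = endsAt E r := by
  rw [endsAt_redirectEdge, if_neg hru.symm]
  exact erase_eq_of_notMem fun h => hrt (mem_endsAt.mp h).2.symm

lemma endsAt_redirectEdge_source (hE : endsAt E t = {(s, t)}) (htu : t ≠ u) :
    endsAt (redirectEdge E s t u) t = ∅ := by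
  rw [endsAt_redirectEdge, if_neg htu.symm, hE, erase_singleton]

lemma endsAt_redirectEdge_target (hE : endsAt E u = ∅) :
    endsAt (redirectEdge E s t u) u = {(s, u)} := by
  rw [endsAt_redirectEdge, if_pos rfl, hE, erase_empty, insert_empty]

end redirectEdge

namespace IsFlow

variable {E : FlowGraph} {A B : Finset ℤ} {s t u : ℤ}

theorem redirect (hE : IsFlow E A B) (hst : (s, t) ∈ E) (ht : t ∈ B) (hsu : s < u)
    (huA : u ∉ A) (huB : u ∉ B) (hu : beginsAt E u = ∅ ∧ endsAt E u = ∅) :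
    IsFlow (redirectEdge E s t u) A (insert u (B.erase t)) where
  edge_lt e he := by
    rcases mem_redirectEdge.mp he with rfl | ⟨-, he⟩
    exacts [hsu, hE.edge_lt e he]
  disjAB := disjoint_left.mpr fun x hxA hx => by
    rcases mem_insert.mp hx with rfl | hx
    exacts [huA hxA, disjoint_left.mp hE.disjAB hxA (mem_of_mem_erase hx)]
  source_out a ha := by
    rw [card_beginsAt_redirectEdge hst (notMem_of_endsAt_eq_empty hu.2 s)]
    exact hE.source_out a ha
  source_in a ha := by
    rw [endsAt_redirectEdge_of_ne (fun h : a = t => disjoint_left.mp hE.disjAB ha (h ▸ ht))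
      (fun h : a = u => huA (h ▸ ha))]
    exact hE.source_in a ha
  sink_in b hb := by
    rcases mem_insert.mp hb with rfl | hb
    · rw [endsAt_redirectEdge_target hu.2, card_singleton]
    · obtain ⟨hbt, hbB⟩ := mem_erase.mp hb
      rw [endsAt_redirectEdge_of_ne hbt fun h : b = u => huB (h ▸ hbB)]
      exact hE.sink_in b hbB
  sink_out b hb := by
    rw [← card_eq_zero, card_beginsAt_redirectEdge hst (notMem_of_endsAt_eq_empty hu.2 s),
      card_eq_zero]
    rcases mem_insert.mp hb with rfl | hb
    exacts [hu.1, hE.sink_out b (mem_of_mem_erase hb)]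
  transit r hrA hrB := by
    have hru : r ≠ u := fun h => hrB (h ▸ mem_insert_self r _)
    have hcard := card_beginsAt_redirectEdge (u := u) hst (notMem_of_endsAt_eq_empty hu.2 s) r
    rcases eq_or_ne r t with rfl | hrt
    · refine .inl ⟨?_, endsAt_redirectEdge_source (hE.endsAt_sink ht hst) hru⟩
      rw [← card_eq_zero, hcard, card_eq_zero]
      exact hE.sink_out r ht
    · have hrB' : r ∉ B := fun h => hrB (mem_insert_of_mem (mem_erase.mpr ⟨hrt, h⟩))
      simpa only [← card_eq_zero, hcard, endsAt_redirectEdge_of_ne hrt hru]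
        using hE.transit r hrA hrB'

theorem transitSet_redirectEdge (hE : IsFlow E A B) (hst : (s, t) ∈ E) (ht : t ∈ B)
    (huB : u ∉ B) (hu : beginsAt E u = ∅ ∧ endsAt E u = ∅) :
    transitSet (redirectEdge E s t u) A (insert u (B.erase t)) = transitSet E A B := by
  have hcard := card_beginsAt_redirectEdge (u := u) hst (notMem_of_endsAt_eq_empty hu.2 s)
  ext r
  simp only [mem_transitSet, mem_insert, mem_erase, not_or, not_and_or, not_not]
  rcases eq_or_ne r t with rfl | hrt
  · have hbeg : beginsAt (redirectEdge E s r u) r = ∅ := by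
      rw [← card_eq_zero, hcard, card_eq_zero]
      exact hE.sink_out r ht
    have hu' : r ≠ u := fun h => huB (h ▸ ht)
    simp [hbeg, endsAt_redirectEdge_source (hE.endsAt_sink ht hst) hu', ht]
  rcases eq_or_ne r u with rfl | hru
  · simp [hu]
  · rw [← card_pos, hcard, card_pos, endsAt_redirectEdge_of_ne hrt hru]
    simp [hrt, hru]

theorem linked_redirectEdge (hE : IsFlow E A B) (hst : (s, t) ∈ E) (ht : t ∈ B) {x y : ℤ}
    (h : Linked E x y) :
    Linked (redirectEdge E s t u) (update id t u x) (update id t u y) := by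
  refine h.map _ fun v w hvw => ?_
  rcases eq_or_ne (v, w) (s, t) with hvw' | hvw'
  · obtain ⟨rfl, rfl⟩ := Prod.mk.inj hvw'
    rw [update_of_ne (hE.edge_lt _ hst).ne, update_self]
    exact mem_redirectEdge.mpr (.inl rfl)
  · have hv : v ≠ t := fun h =>
      notMem_empty _ (hE.sink_out t ht ▸ mem_beginsAt.mpr ⟨hvw, h⟩)
    have hw : w ≠ t := fun h => hvw' (mem_singleton.mp
      (hE.endsAt_sink ht hst ▸ mem_endsAt.mpr ⟨hvw, h⟩))
    rw [update_of_ne hv, update_of_ne hw]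
    exact mem_redirectEdge.mpr (.inr ⟨hvw', hvw⟩)

end IsFlow

lemma Function.Injective.update_of_forall_ne {ι α : Type*} [DecidableEq ι] {b : ι → α}
    (hb : Injective b) (k : ι) {v : α} (hv : ∀ j, b j ≠ v) : Injective (update b k v) := by
  intro j l h
  by_cases hj : j = k <;> by_cases hl : l = k
  · exact hj.trans hl.symm
  · subst hj
    rw [update_self, update_of_ne hl] at h
    exact absurd h.symm (hv l)
  · subst hl
    rw [update_self, update_of_ne hj] at h
    exact absurd h (hv j)
  · rw [update_of_ne hj, update_of_ne hl] at h
    exact hb h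

lemma sum_update_sub {ι : Type*} [Fintype ι] [DecidableEq ι] (b : ι → ℤ) (k : ι)
    (v i : ℤ) :
    ∑ j, (update b k v j - i) = ∑ j, (b j - i) + (v - b k) := by
  rw [sum_sub_distrib, sum_sub_distrib, sum_update_of_mem (mem_univ k), sdiff_singleton_eq_erase,
    ← add_sum_erase univ b (mem_univ k)]
  ring

lemma srcSet_update {q : ℕ} {b : Fin q → ℤ} (hb : Injective b) (k : Fin q) (v : ℤ) :
    srcSet (update b k v) = insert v ((srcSet b).erase (b k)) := by
  ext x
  simp only [srcSet, mem_image, mem_univ, true_and, mem_insert, mem_erase]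
  constructor
  · rintro ⟨j, rfl⟩
    rcases eq_or_ne j k with rfl | hj
    · exact .inl (update_self ..)
    · exact .inr ⟨by simpa [update_of_ne hj] using hb.ne hj, j, (update_of_ne hj ..).symm⟩
  · rintro (rfl | ⟨hne, j, rfl⟩)
    · exact ⟨k, update_self ..⟩
    · exact ⟨j, update_of_ne (fun h : j = k => hne (by rw [h])) ..⟩

namespace IsLinkingPerm

variable {q : ℕ} {E : FlowGraph} {A : Finset ℤ} {a b : Fin q → ℤ} {σ : Equiv.Perm (Fin q)}

theorem unique (hσ : IsLinkingPerm E a b σ) (hE : IsFlow E A (srcSet b)) (hb : Injective b)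
    {τ : Equiv.Perm (Fin q)} (hτ : IsLinkingPerm E a b τ) : σ = τ :=
  Equiv.ext fun j => hb <| hE.eq_of_linked (mem_image_of_mem b (mem_univ _))
    (mem_image_of_mem b (mem_univ _)) ((hσ j).symm.trans (hτ j))

theorem redirectEdge_update (hσ : IsLinkingPerm E a b σ) (hE : IsFlow E A (srcSet b))
    (hb : Injective b) {k : Fin q} {s : ℤ} (hs : (s, b k) ∈ E) (ha : ∀ j, a j ≠ b k)
    (u : ℤ) :
    IsLinkingPerm (redirectEdge E s (b k) u) a (update b k u) σ := fun j => by
  simpa [update_apply, hb.eq_iff, ha] using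
    hE.linked_redirectEdge (u := u) hs (mem_image_of_mem b (mem_univ k)) (hσ j)

end IsLinkingPerm

theorem signValue_eq_neg_of_sum_eq_add_one {q : ℕ} {i : ℤ} {b b' : Fin q → ℤ}
    {σ : Equiv.Perm (Fin q)} {E E' : FlowGraph} {A A' B B' : Finset ℤ}
    (hpos : 0 ≤ ∑ j, (b j - i)) (hsum : ∑ j, (b' j - i) = ∑ j, (b j - i) + 1)
    (htr : transitSet E' A' B' = transitSet E A B) :
    signValue i b' σ E' A' B' = -signValue i b σ E A B := by
  have htoNat : (∑ j, (b j - i) + 1).toNat = (∑ j, (b j - i)).toNat + 1 := by omega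
  rw [signValue, signValue, htr, hsum, htoNat, add_right_comm, pow_succ]
  ring

theorem statement7_general {q : ℕ} (i : ℤ) (a b : Fin (q + 1) → ℤ)
    (hb : StrictAnti b)
    (hai : ∀ j, a j ≤ i) (hbi : ∀ j, i < b j)
    (E : FlowGraph) (hE : InF i a b E)
    (hsink : ∀ j, b j ≠ b (Fin.last q) + 1)
    (s : ℤ) (hs : (s, b (Fin.last q)) ∈ E) :
    InF i a (Function.update b (Fin.last q) (b (Fin.last q) + 1))
      (insert (s, b (Fin.last q) + 1) (E.erase (s, b (Fin.last q)))) ∧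
    ∀ σ τ : Equiv.Perm (Fin (q + 1)),
      IsLinkingPerm E a b σ →
      IsLinkingPerm (insert (s, b (Fin.last q) + 1) (E.erase (s, b (Fin.last q))))
        a (Function.update b (Fin.last q) (b (Fin.last q) + 1)) τ →
      signValue i (Function.update b (Fin.last q) (b (Fin.last q) + 1)) τ
          (insert (s, b (Fin.last q) + 1) (E.erase (s, b (Fin.last q))))
          (srcSet a) (srcSet (Function.update b (Fin.last q) (b (Fin.last q) + 1)))
        = - signValue i b σ E (srcSet a) (srcSet b) := by
  obtain ⟨hF, hle⟩ := hE
  set β := b (Fin.last q)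
  have hβB : β ∈ srcSet b := mem_image_of_mem b (mem_univ _)
  have haβ : ∀ j, a j ≠ β := fun j => ((hai j).trans_lt (hbi _)).ne
  have hβA : β + 1 ∉ srcSet a := fun h => by
    obtain ⟨j, -, hj⟩ := mem_image.mp h
    linarith [hai j, hbi (Fin.last q)]
  have hβB' : β + 1 ∉ srcSet b := fun h => by
    obtain ⟨j, -, hj⟩ := mem_image.mp h
    exact hsink j hj
  have hiso := hF.isolated_of_notMem_transitSet hβA hβB' fun h =>
    (hle _ h).not_gt (by linarith [hbi (Fin.last q)])
  have hF' := hF.redirect hs hβB ((hF.edge_lt _ hs).trans (lt_add_one β)) hβA hβB' hiso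
  have htr := hF.transitSet_redirectEdge hs hβB hβB' hiso
  rw [← srcSet_update hb.injective] at hF' htr
  refine ⟨⟨hF', fun r hr => hle r (by rwa [IsTransitPoint, ← htr])⟩,
    fun σ τ hσ hτ => ?_⟩
  obtain rfl := (hσ.redirectEdge_update hF hb.injective hs haβ (β + 1)).unique hF'
    (hb.injective.update_of_forall_ne _ hsink) hτ
  exact signValue_eq_neg_of_sum_eq_add_one (sum_nonneg fun j _ => sub_nonneg.mpr (hbi j).le)
    (by rw [sum_update_sub]; ring) htr

/-- Lemma 17: let `Γ ∈ 𝓕_i(a_1,…,a_q; b_1,…,b_q)` with `b_q + 1` not a sink of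
`Γ`. Then `R(Γ)` (replacing the edge `(s, b_q)` by `(s, b_q + 1)`) belongs to
`𝓕_i(a_1,…,a_q; b_1,…,b_{q-1}, b_q + 1)` and has `i`-sign opposite to that of `Γ`. -/
theorem statement7 {q : ℕ} (i : ℤ) (a b : Fin (q + 1) → ℤ)
    (ha : StrictMono a) (hb : StrictAnti b)
    (hai : ∀ j, a j ≤ i) (hbi : ∀ j, i < b j)
    (E : FlowGraph) (hE : InF i a b E)
    (hsink : ∀ j, b j ≠ b (Fin.last q) + 1)
    (s : ℤ) (hs : (s, b (Fin.last q)) ∈ E) :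
    InF i a (Function.update b (Fin.last q) (b (Fin.last q) + 1))
      (insert (s, b (Fin.last q) + 1) (E.erase (s, b (Fin.last q)))) ∧
    ∀ σ τ : Equiv.Perm (Fin (q + 1)),
      IsLinkingPerm E a b σ →
      IsLinkingPerm (insert (s, b (Fin.last q) + 1) (E.erase (s, b (Fin.last q))))
        a (Function.update b (Fin.last q) (b (Fin.last q) + 1)) τ →
      signValue i (Function.update b (Fin.last q) (b (Fin.last q) + 1)) τ
          (insert (s, b (Fin.last q) + 1) (E.erase (s, b (Fin.last q))))
          (srcSet a) (srcSet (Function.update b (Fin.last q) (b (Fin.last q) + 1)))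
        = - signValue i b σ E (srcSet a) (srcSet b) :=
  statement7_general i a b hb hai hbi E hE hsink s hs
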